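/- arXiv:1301.6569 — 3 statements merged into one kernel-verified Lean document; each statement's English description precedes it below -/
import Mathlib

section
/- A square matrix Z over a field admits a factorization Z = L·D·U with L lower unitriangular, D invertible diagonal, and U upper unitriangular, if and only if all leading principal minors of Z are nonzero. -/
/-!
Peel off the last row and column. If the leading `n × n` block is `A = L' D' U'`, the block
factorization of the Schur complement
`[A b; c δ] = [L' 0; x 1] · [D' 0; 0 s] · [U' y; 0 1]`, with `x = c (D' U')⁻¹`, `y = (L' D')⁻¹ b`
and `s = δ - x D' y`, extends it to the whole matrix; `s ≠ 0` because the determinant of the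
whole matrix is the product of the pivots. Conversely, since `L` is lower and `U` upper
triangular, the leading `k × k` block of `L D U` is the product of the leading blocks, so the
`k`-th leading principal minor is the product of the first `k` pivots.
-/

open Finset

namespace Matrix

section Submatrix

variable {R : Type*} [Zero R] {m ι : Type*} [Preorder m] [Preorder ι]

theorem IsLowerTriangular.submatrix_of_strictMono {L : Matrix m m R}
    (hL : L.IsLowerTriangular) {f : ι → m} (hf : StrictMono f) :
    (L.submatrix f f).IsLowerTriangular :=
  fun _ _ hij => hL (hf hij)

theorem IsUpperTriangular.submatrix_of_strictMono {U : Matrix m m R}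
    (hU : U.IsUpperTriangular) {f : ι → m} (hf : StrictMono f) :
    (U.submatrix f f).IsUpperTriangular :=
  fun _ _ hij => hU (hf hij)

end Submatrix

section Triangular

variable {R : Type*} [CommRing R] {m : Type*} [Fintype m] [DecidableEq m] [LinearOrder m]

theorem IsLowerTriangular.det_eq_one {L : Matrix m m R} (hL : L.IsLowerTriangular)
    (hL₁ : ∀ i, L i i = 1) : L.det = 1 := by
  rw [det_of_isLowerTriangular L hL]
  exact prod_eq_one fun i _ => hL₁ i

theorem IsUpperTriangular.det_eq_one {U : Matrix m m R} (hU : U.IsUpperTriangular)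
    (hU₁ : ∀ i, U i i = 1) : U.det = 1 := by
  rw [det_of_isUpperTriangular hU]
  exact prod_eq_one fun i _ => hU₁ i

theorem det_mul_diagonal_mul_of_unitriangular {L U : Matrix m m R}
    (hL : L.IsLowerTriangular) (hL₁ : ∀ i, L i i = 1)
    (hU : U.IsUpperTriangular) (hU₁ : ∀ i, U i i = 1) (d : m → R) :
    (L * diagonal d * U).det = ∏ i, d i := by
  rw [det_mul, det_mul, hL.det_eq_one hL₁, hU.det_eq_one hU₁, det_diagonal, one_mul, mul_one]

end Triangular

section LeadingBlock

variable {R : Type*} [CommRing R] {n k : ℕ} (h : k ≤ n)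

theorem IsLowerTriangular.mul_submatrix_castLE {ι κ : Type*} {L : Matrix (Fin n) (Fin n) R}
    (hL : L.IsLowerTriangular) (M : Matrix (Fin n) ι R) (g : κ → ι) :
    (L * M).submatrix (Fin.castLE h) g =
      L.submatrix (Fin.castLE h) (Fin.castLE h) * M.submatrix (Fin.castLE h) g := by
  ext i j
  refine (Fintype.sum_of_injective _ (Fin.castLE_injective h) _ _ (fun l hl => ?_)
    fun _ => rfl).symm
  rw [Fin.range_castLE, Set.mem_ofPred_eq, not_lt] at hl
  exact mul_eq_zero_of_left (hL (show Fin.castLE h i < l from i.isLt.trans_le hl)) _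

theorem IsUpperTriangular.submatrix_castLE_mul {ι κ : Type*} {U : Matrix (Fin n) (Fin n) R}
    (hU : U.IsUpperTriangular) (M : Matrix ι (Fin n) R) (g : κ → ι) :
    (M * U).submatrix g (Fin.castLE h) =
      M.submatrix g (Fin.castLE h) * U.submatrix (Fin.castLE h) (Fin.castLE h) := by
  rw [← transpose_inj, transpose_submatrix, transpose_mul,
    IsLowerTriangular.mul_submatrix_castLE h hU.transpose]
  simp only [transpose_mul, transpose_submatrix]

theorem det_submatrix_castLE_mul_diagonal_mul {L U : Matrix (Fin n) (Fin n) R}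
    (hL : L.IsLowerTriangular) (hL₁ : ∀ i, L i i = 1)
    (hU : U.IsUpperTriangular) (hU₁ : ∀ i, U i i = 1) (d : Fin n → R) :
    ((L * diagonal d * U).submatrix (Fin.castLE h) (Fin.castLE h)).det =
      ∏ i, d (Fin.castLE h i) := by
  rw [hU.submatrix_castLE_mul h, hL.mul_submatrix_castLE h,
    submatrix_diagonal _ _ (Fin.castLE_injective h),
    det_mul_diagonal_mul_of_unitriangular (hL.submatrix_of_strictMono (Fin.strictMono_castLE h))
      (fun _ => hL₁ _) (hU.submatrix_of_strictMono (Fin.strictMono_castLE h)) (fun _ => hU₁ _)]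
  rfl

end LeadingBlock

section Blocks

variable {R : Type*} [CommRing R]

theorem fromBlocks_mul_mul_eq_of_isUnit_det {m o : Type*} [Fintype m] [DecidableEq m]
    [Fintype o] [DecidableEq o] {L D U : Matrix m m R}
    (hLD : IsUnit (L * D).det) (hDU : IsUnit (D * U).det)
    (B : Matrix m o R) (C : Matrix o m R) (δ : Matrix o o R) :
    fromBlocks (L * D * U) B C δ =
      fromBlocks L 0 (C * (D * U)⁻¹) 1 *
        fromBlocks D 0 0 (δ - C * (D * U)⁻¹ * D * ((L * D)⁻¹ * B)) *
        fromBlocks U ((L * D)⁻¹ * B) 0 1 := by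
  rw [fromBlocks_multiply, fromBlocks_multiply]
  congr 1 <;>
    simp only [Matrix.mul_zero, Matrix.zero_mul, add_zero, zero_add, Matrix.mul_one,
      Matrix.one_mul]
  · rw [mul_nonsing_inv_cancel_left _ _ hLD]
  · rw [Matrix.mul_assoc _ D U, nonsing_inv_mul_cancel_right _ _ hDU]
  · abel

variable {m p : ℕ}

theorem IsLowerTriangular.reindex_fromBlocks {A : Matrix (Fin m) (Fin m) R}
    {δ : Matrix (Fin p) (Fin p) R} (hA : A.IsLowerTriangular) (hδ : δ.IsLowerTriangular)
    (C : Matrix (Fin p) (Fin m) R) :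
    (reindex finSumFinEquiv finSumFinEquiv (fromBlocks A 0 C δ)).IsLowerTriangular := by
  rw [IsLowerTriangular, blockTriangular_reindex_iff]
  rintro (i | i) (j | j) hij
  · exact hA hij
  · rfl
  · exact absurd hij (by simp [Fin.lt_def]; omega)
  · exact hδ ((Fin.natAdd_lt_natAdd_iff m).1 hij)

theorem IsUpperTriangular.reindex_fromBlocks {A : Matrix (Fin m) (Fin m) R}
    {δ : Matrix (Fin p) (Fin p) R} (hA : A.IsUpperTriangular) (hδ : δ.IsUpperTriangular)
    (B : Matrix (Fin m) (Fin p) R) :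
    (reindex finSumFinEquiv finSumFinEquiv (fromBlocks A B 0 δ)).IsUpperTriangular := by
  have := IsLowerTriangular.reindex_fromBlocks hA.transpose hδ.transpose Bᵀ
  rw [← transpose_zero, ← fromBlocks_transpose, ← transpose_reindex] at this
  exact Matrix.blockTriangular_transpose_iff.1 this

theorem reindex_fromBlocks_apply_self_eq_one {A : Matrix (Fin m) (Fin m) R}
    {δ : Matrix (Fin p) (Fin p) R} (hA : ∀ i, A i i = 1) (hδ : ∀ i, δ i i = 1)
    (B : Matrix (Fin m) (Fin p) R) (C : Matrix (Fin p) (Fin m) R) (i : Fin (m + p)) :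
    reindex finSumFinEquiv finSumFinEquiv (fromBlocks A B C δ) i i = 1 := by
  obtain ⟨i | i, rfl⟩ := finSumFinEquiv.surjective i <;> simp [hA, hδ]

end Blocks

section LDU

variable {K : Type*} [Field K]

def HasLDU {m : Type*} [Fintype m] [DecidableEq m] [LT m] (Z : Matrix m m K) : Prop :=
  ∃ (L : Matrix m m K) (d : m → K) (U : Matrix m m K),
    L.IsLowerTriangular ∧ (∀ i, L i i = 1) ∧ (∀ i, d i ≠ 0) ∧
      U.IsUpperTriangular ∧ (∀ i, U i i = 1) ∧ Z = L * diagonal d * U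

theorem HasLDU.of_submatrix_castSucc {n : ℕ} {Z : Matrix (Fin (n + 1)) (Fin (n + 1)) K}
    (hA : HasLDU (Z.submatrix Fin.castSucc Fin.castSucc)) (hZ : Z.det ≠ 0) : HasLDU Z := by
  obtain ⟨L', d', U', hL', hL'₁, hd', hU', hU'₁, hA⟩ := hA
  set e : Fin n ⊕ Fin 1 ≃ Fin (n + 1) := finSumFinEquiv
  set W := reindex e.symm e.symm Z
  have hD' : IsUnit (diagonal d').det := by
    rw [det_diagonal]; exact (prod_ne_zero_iff.2 fun i _ => hd' i).isUnit
  have hLD : IsUnit (L' * diagonal d').det := by rwa [det_mul, hL'.det_eq_one hL'₁, one_mul]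
  have hDU : IsUnit (diagonal d' * U').det := by rwa [det_mul, hU'.det_eq_one hU'₁, mul_one]
  set x := W.toBlocks₂₁ * (diagonal d' * U')⁻¹
  set y := (L' * diagonal d')⁻¹ * W.toBlocks₁₂
  set s := (W.toBlocks₂₂ - x * diagonal d' * y) 0 0
  have hW :
      W = fromBlocks L' 0 x 1 * diagonal (Sum.elim d' fun _ => s) * fromBlocks U' y 0 1 := by
    have h₁₁ : W.toBlocks₁₁ = L' * diagonal d' * U' := hA
    have h₂₂ : W.toBlocks₂₂ - x * diagonal d' * y = diagonal fun _ => s := by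
      ext i j
      rw [Subsingleton.elim i 0, Subsingleton.elim j 0, diagonal_apply_eq]
    rw [← fromBlocks_diagonal, ← h₂₂, ← fromBlocks_mul_mul_eq_of_isUnit_det hLD hDU, ← h₁₁,
      fromBlocks_toBlocks]
  set L := reindex e e (fromBlocks L' 0 x 1)
  set U := reindex e e (fromBlocks U' y 0 1)
  set d := Sum.elim d' (fun _ => s) ∘ e.symm
  have hL : L.IsLowerTriangular := hL'.reindex_fromBlocks blockTriangular_one x
  have hU : U.IsUpperTriangular := hU'.reindex_fromBlocks blockTriangular_one y
  have hL₁ : ∀ i, L i i = 1 :=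
    reindex_fromBlocks_apply_self_eq_one hL'₁ (fun _ => one_apply_eq _) _ _
  have hU₁ : ∀ i, U i i = 1 :=
    reindex_fromBlocks_apply_self_eq_one hU'₁ (fun _ => one_apply_eq _) _ _
  have hZ' : Z = L * diagonal d * U := by
    rw [← submatrix_diagonal_equiv]
    simp only [L, U, reindex_apply, submatrix_mul_equiv, ← hW, W, submatrix_submatrix,
      Equiv.symm_symm, Equiv.self_comp_symm, submatrix_id_id]
  refine ⟨L, d, U, hL, hL₁, fun i => ?_, hU, hU₁, hZ'⟩
  rw [hZ', det_mul_diagonal_mul_of_unitriangular hL hL₁ hU hU₁, prod_ne_zero_iff] at hZ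
  exact hZ i (mem_univ i)

theorem hasLDU_of_det_submatrix_castLE_ne_zero :
    ∀ {n : ℕ} {Z : Matrix (Fin n) (Fin n) K},
      (∀ (k : ℕ) (h : k ≤ n), (Z.submatrix (Fin.castLE h) (Fin.castLE h)).det ≠ 0) → HasLDU Z
  | 0, _, _ => ⟨1, 1, 1, fun i => i.elim0, fun i => i.elim0, fun i => i.elim0,
      fun i => i.elim0, fun i => i.elim0, Subsingleton.elim _ _⟩
  | n + 1, Z, hZ => by
    refine HasLDU.of_submatrix_castSucc (hasLDU_of_det_submatrix_castLE_ne_zero fun k hk => ?_) ?_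
    · exact hZ k (hk.trans n.le_succ)
    · simpa using hZ (n + 1) le_rfl

theorem HasLDU.det_submatrix_castLE_ne_zero {n k : ℕ} {Z : Matrix (Fin n) (Fin n) K}
    (hZ : HasLDU Z) (h : k ≤ n) : (Z.submatrix (Fin.castLE h) (Fin.castLE h)).det ≠ 0 := by
  obtain ⟨L, d, U, hL, hL₁, hd, hU, hU₁, rfl⟩ := hZ
  rw [det_submatrix_castLE_mul_diagonal_mul h hL hL₁ hU hU₁]
  exact prod_ne_zero_iff.2 fun i _ => hd _

theorem hasLDU_iff_forall_det_submatrix_castLE_ne_zero {n : ℕ} {Z : Matrix (Fin n) (Fin n) K} :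
    HasLDU Z ↔ ∀ (k : ℕ) (h : k ≤ n), (Z.submatrix (Fin.castLE h) (Fin.castLE h)).det ≠ 0 :=
  ⟨fun hZ _ h => hZ.det_submatrix_castLE_ne_zero h, hasLDU_of_det_submatrix_castLE_ne_zero⟩

end LDU

end Matrix

/-- A square matrix over a field has an LDU factorization (L lower unitriangular,
D invertible diagonal, U upper unitriangular) iff all leading principal minors
are nonzero. -/
theorem stmt_1 {K : Type*} [Field K] (n : ℕ) (Z : Matrix (Fin n) (Fin n) K) :
    (∃ L D U : Matrix (Fin n) (Fin n) K,
        (∀ i j : Fin n, i < j → L i j = 0) ∧ (∀ i : Fin n, L i i = 1) ∧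
        (∃ d : Fin n → K, D = Matrix.diagonal d ∧ ∀ i : Fin n, d i ≠ 0) ∧
        (∀ i j : Fin n, j < i → U i j = 0) ∧ (∀ i : Fin n, U i i = 1) ∧
        Z = L * D * U) ↔
      ∀ (k : ℕ) (h : k ≤ n), (Z.submatrix (Fin.castLE h) (Fin.castLE h)).det ≠ 0 := by
  rw [← Matrix.hasLDU_iff_forall_det_submatrix_castLE_ne_zero]
  constructor
  · rintro ⟨L, D, U, hL, hL₁, ⟨d, rfl, hd⟩, hU, hU₁, hZ⟩
    exact ⟨L, d, U, hL, hL₁, hd, hU, hU₁, hZ⟩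
  · rintro ⟨L, d, U, hL, hL₁, hd, hU, hU₁, hZ⟩
    exact ⟨L, Matrix.diagonal d, U, hL, hL₁, ⟨d, rfl, hd⟩, hU, hU₁, hZ⟩
end

section
/- For an integer n ≥ 1 and the determinant polynomial det(z) on p×p complex matrices, the Cayley-type identity holds: det(∂/∂z) det(z)^n = n(n+1)⋯(n+p−1) · det(z)^{n−1}, where det(∂/∂z) is the differential operator obtained by formally substituting the partial derivatives ∂/∂z_{ij} into the determinant. -/
/-! Write `N(r, c) = ∂_{r₀c₀} ⋯ ∂_{r_{s-1}c_{s-1}} det z` and `D_{r,c}` for the `(r, c)`-minor of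
`det(∂/∂z)`. By induction on `s`, `D_{r,c} det^{m+1} = (m+1)⋯(m+s) · det^m · N(r, c)`: expanding
`D_{r,c}` along its first row and applying the product rule, the induction step comes down to
`∑ⱼ ± ∂_{r₀cⱼ} N(r', c'ⱼ) = (s+1) N(r, c)` (antisymmetry of `N` in the columns) and
`∑ⱼ ± ∂_{r₀cⱼ}(det z) · N(r', c'ⱼ) = det z · N(r, c)`. Both follow from Jacobi's complementary
minor theorem `N(r, c) = det z · det((z⁻¹)_{c,r})`, proved over the fraction field: `N(r, c)` is
the determinant of `z` with row `rᵢ` replaced by the unit row `e_{cᵢ}`, and multiplying this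
matrix by `z⁻¹` gives a matrix equal to the identity outside the rows `r`. For `r = c = id`,
`N = 1` and the minor is the whole operator. -/

open MvPolynomial

/-- The generic p×p matrix of indeterminates. -/
noncomputable def genMatrix (p : ℕ) : Matrix (Fin p) (Fin p) (MvPolynomial (Fin p × Fin p) ℚ) :=
  Matrix.of fun i j => X (i, j)

/-- The operator det(∂/∂z) = Σ_σ sgn(σ) ∏_i ∂/∂z_{iσ(i)} applied to a polynomial. -/
noncomputable def detDerivApply (p : ℕ) (P : MvPolynomial (Fin p × Fin p) ℚ) :
    MvPolynomial (Fin p × Fin p) ℚ :=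
  ∑ σ : Equiv.Perm (Fin p),
    (Equiv.Perm.sign σ : ℤ) •
      (List.finRange p).foldr (fun i Q => pderiv (i, σ i) Q) P

open Equiv Function

namespace MvPolynomial

variable {R σ : Type*} [CommSemiring R]

noncomputable def iteratedPDeriv : {s : ℕ} → (Fin s → σ) → MvPolynomial σ R →ₗ[R] MvPolynomial σ R
  | 0, _ => LinearMap.id
  | _ + 1, f => (pderiv (f 0)).toLinearMap ∘ₗ iteratedPDeriv (f ∘ Fin.succ)

theorem iteratedPDeriv_zero (f : Fin 0 → σ) (P : MvPolynomial σ R) :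
    iteratedPDeriv f P = P := rfl

theorem iteratedPDeriv_succ {s : ℕ} (f : Fin (s + 1) → σ) (P : MvPolynomial σ R) :
    iteratedPDeriv f P = pderiv (f 0) (iteratedPDeriv (f ∘ Fin.succ) P) := rfl

theorem foldr_finRange_pderiv {s : ℕ} (f : Fin s → σ) (P : MvPolynomial σ R) :
    (List.finRange s).foldr (fun i Q => pderiv (f i) Q) P = iteratedPDeriv f P := by
  induction s with
  | zero => rfl
  | succ s ih =>
    rw [List.finRange_succ, List.foldr_cons, List.foldr_map]
    exact congrArg (pderiv (f 0)) (ih (f ∘ Fin.succ))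

end MvPolynomial

namespace Derivation

variable {R A n : Type*} [CommRing R] [CommRing A] [Algebra R A] [Fintype n] [DecidableEq n]
  (D : Derivation R A A)

theorem map_det_eq_zero (M : Matrix n n A) (h : ∀ i j, D (M i j) = 0) : D M.det = 0 := by
  rw [Matrix.det_apply]
  refine Finset.sum_induction _ (fun x => D x = 0)
    (fun _ _ ha hb => by rw [map_add, ha, hb, add_zero]) D.map_zero fun σ _ => ?_
  rw [Units.smul_def, map_zsmul,
    Finset.prod_induction _ (fun x => D x = 0) (fun _ _ ha hb => by simp [ha, hb])
      D.map_one_eq_zero fun i _ => h _ _, zsmul_zero]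

theorem map_det_eq_det_updateRow (M : Matrix n n A) (a : n) (h : ∀ i ≠ a, ∀ j, D (M i j) = 0) :
    D M.det = (M.updateRow a fun j => D (M a j)).det := by
  have hadj : ∀ j, D (M.adjugate j a) = 0 := fun j => by
    rw [Matrix.adjugate_apply]
    refine D.map_det_eq_zero _ fun i k => ?_
    rcases eq_or_ne i a with rfl | hi
    · rw [Matrix.updateRow_self, Pi.single_apply]
      split_ifs <;> simp
    · rw [Matrix.updateRow_ne hi, h i hi]
  rw [Matrix.det_eq_sum_mul_adjugate_row M a,
    Matrix.det_eq_sum_mul_adjugate_row (M.updateRow a _) a, map_sum]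
  refine Finset.sum_congr rfl fun j _ => ?_
  rw [leibniz, hadj, smul_zero, zero_add, smul_eq_mul, mul_comm, Matrix.updateRow_self,
    Matrix.adjugate_apply, Matrix.adjugate_apply, Matrix.updateRow_idem]

end Derivation

theorem Equiv.Perm.sum_sign_smul_decomposeFin {M : Type*} [AddCommGroup M] {s : ℕ}
    (g : Perm (Fin (s + 1)) → M) :
    ∑ π, Perm.sign π • g π = ∑ j, Perm.sign (swap 0 j) •
      ∑ π', Perm.sign π' • g (Perm.decomposeFin.symm (j, π')) := by
  rw [← Equiv.sum_comp Perm.decomposeFin.symm, Fintype.sum_prod_type]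
  simp only [Perm.decomposeFin.symm_sign, mul_smul, Finset.smul_sum, Perm.sign_swap', eq_comm]

/-- Laplace expansion along column `0`, with the minors indexed as in `Perm.decomposeFin`
(rows `swap 0 j ∘ succ` instead of `j.succAbove`), to match `Cayley.minorDetPDeriv_succ`. -/
theorem Matrix.det_succ_column_zero_swap {S : Type*} [CommRing S] {s : ℕ}
    (B : Matrix (Fin (s + 1)) (Fin (s + 1)) S) :
    B.det = ∑ j, Perm.sign (Equiv.swap 0 j) •
      (B j 0 * (B.submatrix (fun i => Equiv.swap 0 j i.succ) Fin.succ).det) := by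
  rw [Matrix.det_apply, Perm.sum_sign_smul_decomposeFin]
  refine Finset.sum_congr rfl fun j _ => ?_
  rw [Matrix.det_apply, Finset.mul_sum]
  congr 1
  refine Finset.sum_congr rfl fun π _ => ?_
  rw [Fin.prod_univ_succ, Perm.decomposeFin_symm_apply_zero, mul_smul_comm]
  simp only [Perm.decomposeFin_symm_apply_succ, Matrix.submatrix_apply]

theorem Matrix.det_eq_det_submatrix_of_row_eq_one {R n ι : Type*} [CommRing R] [Fintype n]
    [DecidableEq n] [Fintype ι] [DecidableEq ι] (M : Matrix n n R) {e : ι → n} (he : Injective e)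
    (h : ∀ i ∉ Set.range e, M i = (1 : Matrix n n R) i) :
    M.det = (M.submatrix e e).det := by
  rw [M.twoBlockTriangular_det (· ∈ Set.range e) fun i hi j hj => by
    rw [h i hi, Matrix.one_apply_ne]; rintro rfl; exact hi hj]
  have hcompl : M.toSquareBlockProp (· ∉ Set.range e) = 1 := by
    ext i j
    rw [Matrix.toSquareBlockProp_def, Matrix.of_apply, h i i.2]
    simp [Matrix.one_apply, Subtype.ext_iff]
  rw [hcompl, Matrix.det_one, mul_one]
  convert (Matrix.det_submatrix_equiv_self (Equiv.ofInjective e he) _).symm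
  rfl

namespace Cayley

variable {p : ℕ}

noncomputable def minorDetPDeriv {s : ℕ} (r c : Fin s → Fin p) :
    Module.End ℚ (MvPolynomial (Fin p × Fin p) ℚ) :=
  ∑ π : Perm (Fin s), Perm.sign π • iteratedPDeriv fun i => (r i, c (π i))

theorem detDerivApply_eq_minorDetPDeriv (P : MvPolynomial (Fin p × Fin p) ℚ) :
    detDerivApply p P = minorDetPDeriv id id P := by
  simp only [detDerivApply, minorDetPDeriv, LinearMap.sum_apply,
    LinearMap.smul_apply, Units.smul_def, foldr_finRange_pderiv]
  rfl

theorem minorDetPDeriv_succ {s : ℕ} (r c : Fin (s + 1) → Fin p)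
    (P : MvPolynomial (Fin p × Fin p) ℚ) :
    minorDetPDeriv r c P = ∑ j, Perm.sign (swap 0 j) •
      pderiv (r 0, c j) (minorDetPDeriv (r ∘ Fin.succ) (c ∘ fun i => swap 0 j i.succ) P) := by
  simp only [minorDetPDeriv, LinearMap.sum_apply, LinearMap.smul_apply]
  rw [Perm.sum_sign_smul_decomposeFin]
  refine Finset.sum_congr rfl fun j _ => ?_
  simp only [map_sum, Units.smul_def, map_zsmul, iteratedPDeriv_succ, comp_def,
    Perm.decomposeFin_symm_apply_zero, Perm.decomposeFin_symm_apply_succ]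

/-- `∂_{r 0, c 0} ⋯ ∂_{r (s-1), c (s-1)} det z`, up to sign the minor of `z` complementary to
rows `r` and columns `c`; for `s = 1` it is the cofactor of the entry `(r 0, c 0)`. -/
noncomputable def cofactor {s : ℕ} (r c : Fin s → Fin p) : MvPolynomial (Fin p × Fin p) ℚ :=
  iteratedPDeriv (fun i => (r i, c i)) (genMatrix p).det

noncomputable def unitRows : {t : ℕ} → (Fin t → Fin p) → (Fin t → Fin p) →
    Matrix (Fin p) (Fin p) (MvPolynomial (Fin p × Fin p) ℚ)
  | 0, _, _ => genMatrix p
  | _ + 1, r, c => (unitRows (r ∘ Fin.succ) (c ∘ Fin.succ)).updateRow (r 0) (Pi.single (c 0) 1)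

theorem unitRows_apply_of_forall_ne {t : ℕ} {r : Fin t → Fin p} (c : Fin t → Fin p) {i : Fin p}
    (h : ∀ k, r k ≠ i) : unitRows r c i = genMatrix p i := by
  induction t with
  | zero => rfl
  | succ t ih =>
    rw [unitRows, Matrix.updateRow_ne (h 0).symm]
    exact ih _ fun k => h k.succ

theorem unitRows_apply_self {t : ℕ} {r : Fin t → Fin p} (hr : Injective r) (c : Fin t → Fin p)
    (k : Fin t) : unitRows r c (r k) = Pi.single (c k) 1 := by
  induction t with
  | zero => exact k.elim0
  | succ t ih =>
    rw [unitRows]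
    cases k using Fin.cases with
    | zero => exact Matrix.updateRow_self
    | succ k =>
      rw [Matrix.updateRow_ne (hr.ne (Fin.succ_ne_zero k))]
      exact ih (hr.comp (Fin.succ_injective t)) _ k

theorem pderiv_unitRows_apply {t : ℕ} (r c : Fin t → Fin p) {a i : Fin p} (b j : Fin p)
    (h : i ≠ a) : pderiv (a, b) (unitRows r c i j) = 0 := by
  induction t with
  | zero => simp [unitRows, genMatrix, pderiv_X, h]
  | succ t ih =>
    rw [unitRows, Matrix.updateRow_apply]
    split_ifs
    · rw [Pi.single_apply]; split_ifs <;> simp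
    · exact ih _ _

theorem cofactor_eq_det_unitRows {t : ℕ} {r : Fin t → Fin p} (hr : Injective r)
    (c : Fin t → Fin p) : cofactor r c = (unitRows r c).det := by
  induction t with
  | zero => rfl
  | succ t ih =>
    rw [cofactor, iteratedPDeriv_succ]
    change pderiv _ (cofactor (r ∘ Fin.succ) (c ∘ Fin.succ)) = _
    rw [ih (hr.comp (Fin.succ_injective t)), (pderiv _).map_det_eq_det_updateRow _ (r 0)
      fun i hi j => pderiv_unitRows_apply _ _ _ _ hi, unitRows]
    congr 2
    funext j
    rw [congrFun (unitRows_apply_of_forall_ne (r := r ∘ Fin.succ) _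
      fun k => hr.ne (Fin.succ_ne_zero k)) j, genMatrix, Matrix.of_apply, pderiv_X]
    simp [Pi.single_apply]

theorem det_genMatrix_ne_zero : (genMatrix p).det ≠ 0 := fun h => by
  set ev := MvPolynomial.eval fun v : Fin p × Fin p => (1 : Matrix (Fin p) (Fin p) ℚ) v.1 v.2
  have hone : ev.mapMatrix (genMatrix p) = 1 := by
    ext i j
    simp [ev, genMatrix]
  have h1 := congrArg ev h
  rw [RingHom.map_det, hone, Matrix.det_one, map_zero] at h1
  exact one_ne_zero h1

variable (p) in
noncomputable abbrev toFrac :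
    MvPolynomial (Fin p × Fin p) ℚ →+* FractionRing (MvPolynomial (Fin p × Fin p) ℚ) :=
  algebraMap _ _

variable (p) in
noncomputable abbrev genMatrixInv :
    Matrix (Fin p) (Fin p) (FractionRing (MvPolynomial (Fin p × Fin p) ℚ)) :=
  ((genMatrix p).map (toFrac p))⁻¹

theorem toFrac_injective : Injective (toFrac p) := IsFractionRing.injective _ _

theorem isUnit_det_map_toFrac : IsUnit ((genMatrix p).map (toFrac p)).det := by
  rw [isUnit_iff_ne_zero, ← RingHom.mapMatrix_apply, ← RingHom.map_det]
  exact (map_ne_zero_iff _ toFrac_injective).mpr det_genMatrix_ne_zero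

theorem toFrac_cofactor {t : ℕ} {r : Fin t → Fin p} (hr : Injective r) (c : Fin t → Fin p) :
    toFrac p (cofactor r c) =
      toFrac p (genMatrix p).det * ((genMatrixInv p).submatrix c r).det := by
  set X := (genMatrix p).map (toFrac p)
  have hXdet : X.det = toFrac p (genMatrix p).det := (RingHom.map_det _ _).symm
  have hX : IsUnit X.det := isUnit_det_map_toFrac
  -- `V` agrees with the identity matrix outside the rows `r`, where it has the rows `c` of `X⁻¹`.
  set V := (unitRows r c).map (toFrac p) * X⁻¹
  have hV : (unitRows r c).map (toFrac p) = V * X := by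
    rw [Matrix.mul_assoc, Matrix.nonsing_inv_mul _ hX, Matrix.mul_one]
  have hV_self : ∀ k l, V (r k) l = X⁻¹ (c k) l := fun k l => by
    simp [V, Matrix.mul_apply, unitRows_apply_self hr, Pi.single_apply]
  have hV_one : ∀ i ∉ Set.range r, V i = (1 : Matrix (Fin p) (Fin p) _) i := fun i hi => by
    ext l
    rw [← Matrix.mul_nonsing_inv X hX]
    simp only [V, Matrix.mul_apply, Matrix.map_apply, X,
      unitRows_apply_of_forall_ne c fun k hk => hi ⟨k, hk⟩]
  rw [cofactor_eq_det_unitRows hr, RingHom.map_det, RingHom.mapMatrix_apply, hV, Matrix.det_mul,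
    mul_comm, hXdet, V.det_eq_det_submatrix_of_row_eq_one hr hV_one]
  congr 2
  ext k l
  exact hV_self k (r l)

theorem cofactor_comp_perm {s : ℕ} {r : Fin s → Fin p} (hr : Injective r) (c : Fin s → Fin p)
    (π : Perm (Fin s)) : cofactor r (c ∘ π) = Perm.sign π • cofactor r c := by
  apply toFrac_injective
  rw [Units.smul_def, map_zsmul, toFrac_cofactor hr, toFrac_cofactor hr, zsmul_eq_mul,
    show (genMatrixInv p).submatrix (c ∘ π) r = ((genMatrixInv p).submatrix c r).submatrix π id
      from rfl, Matrix.det_permute]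
  ring

theorem cofactor_id_id : cofactor (p := p) id id = 1 := by
  apply toFrac_injective
  rw [toFrac_cofactor injective_id, map_one, Matrix.submatrix_id_id, Matrix.det_nonsing_inv,
    RingHom.map_det, RingHom.mapMatrix_apply, Ring.mul_inverse_cancel _ isUnit_det_map_toFrac]

theorem toFrac_pderiv_det (a b : Fin p) :
    toFrac p (pderiv (a, b) (genMatrix p).det) =
      toFrac p (genMatrix p).det * genMatrixInv p b a := by
  have h := toFrac_cofactor (r := ![a]) (injective_of_subsingleton _) ![b]
  rw [Matrix.det_fin_one] at h
  exact h

theorem sum_pderiv_det_mul_cofactor {s : ℕ} {r : Fin (s + 1) → Fin p} (hr : Injective r)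
    (c : Fin (s + 1) → Fin p) :
    ∑ j : Fin (s + 1), Perm.sign (swap 0 j) • (pderiv (r 0, c j) (genMatrix p).det *
      cofactor (r ∘ Fin.succ) (c ∘ fun i => swap 0 j i.succ)) =
      (genMatrix p).det * cofactor r c := by
  apply toFrac_injective
  simp only [map_sum, Units.smul_def, map_zsmul, map_mul, toFrac_pderiv_det, toFrac_cofactor hr,
    toFrac_cofactor (hr.comp (Fin.succ_injective s))]
  rw [Matrix.det_succ_column_zero_swap]
  simp only [Finset.mul_sum]
  refine Finset.sum_congr rfl fun j _ => ?_
  simp only [Units.smul_def, zsmul_eq_mul, Matrix.submatrix_apply, Matrix.submatrix_submatrix]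
  ring

theorem sum_pderiv_cofactor {s : ℕ} {r : Fin (s + 1) → Fin p} (hr : Injective r)
    (c : Fin (s + 1) → Fin p) :
    ∑ j : Fin (s + 1), Perm.sign (swap 0 j) •
      pderiv (r 0, c j) (cofactor (r ∘ Fin.succ) (c ∘ fun i => swap 0 j i.succ)) =
      (s + 1) • cofactor r c := by
  have hswap : ∀ j : Fin (s + 1),
      pderiv (r 0, c j) (cofactor (r ∘ Fin.succ) (c ∘ fun i => swap 0 j i.succ)) =
      Perm.sign (swap 0 j) • cofactor r c := fun j => by
    rw [← cofactor_comp_perm hr]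
    conv_rhs => rw [cofactor, iteratedPDeriv_succ]
    simp only [comp_apply, swap_apply_left]
    rfl
  simp only [hswap, smul_smul, Int.units_mul_self, one_smul, Finset.sum_const, Finset.card_univ,
    Fintype.card_fin]

theorem minorDetPDeriv_det_pow {s : ℕ} {r : Fin s → Fin p} (hr : Injective r)
    (c : Fin s → Fin p) (m : ℕ) :
    minorDetPDeriv r c ((genMatrix p).det ^ (m + 1)) =
      C (∏ j ∈ Finset.range s, ((m : ℚ) + 1 + j)) * (genMatrix p).det ^ m * cofactor r c := by
  induction s with
  | zero => simp [minorDetPDeriv, iteratedPDeriv_zero, cofactor, pow_succ]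
  | succ s ih =>
    set d := (genMatrix p).det
    set a := ∏ j ∈ Finset.range s, ((m : ℚ) + 1 + j)
    set μ : MvPolynomial (Fin p × Fin p) ℚ := m * d ^ (m - 1)
    have hμ : μ * d = m * d ^ m := by
      cases m <;> simp [μ, pow_succ, mul_assoc]
    have hleib : ∀ (ε : ℤˣ) v Q, ε • pderiv v (C a * d ^ m * Q) =
        C a * (μ * ε • (pderiv v d * Q) + d ^ m * ε • pderiv v Q) := fun ε v Q => by
      rw [mul_assoc, pderiv_C_mul, Derivation.leibniz, Derivation.leibniz_pow]
      simp only [μ, smul_eq_mul, nsmul_eq_mul, Units.smul_def, zsmul_eq_mul]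
      ring
    rw [minorDetPDeriv_succ]
    simp only [ih (hr.comp (Fin.succ_injective s)), hleib]
    rw [← Finset.mul_sum, Finset.sum_add_distrib, ← Finset.mul_sum, ← Finset.mul_sum,
      sum_pderiv_det_mul_cofactor hr, sum_pderiv_cofactor hr, ← mul_assoc μ, hμ,
      Finset.prod_range_succ, map_mul]
    simp only [nsmul_eq_mul, map_add, map_natCast, map_one]
    push_cast
    ring

end Cayley

/-- Cayley's identity: det(∂/∂z) det(z)^n = n(n+1)⋯(n+p−1) · det(z)^{n−1}. -/
theorem stmt_13 (p n : ℕ) (hn : 1 ≤ n) :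
    detDerivApply p ((genMatrix p).det ^ n) =
      C (∏ j ∈ Finset.range p, ((n : ℚ) + j)) * (genMatrix p).det ^ (n - 1) := by
  obtain ⟨m, rfl⟩ := Nat.exists_eq_add_of_le' hn
  rw [Cayley.detDerivApply_eq_minorDetPDeriv, Cayley.minorDetPDeriv_det_pow injective_id,
    Cayley.cofactor_id_id, mul_one, Nat.add_sub_cancel]
  push_cast
  rfl
end

section
/- Let f : ℝ^d → ℂ be smooth with all derivatives of moderate growth, and let Q : ℝ^m → ℝ^d be a polynomial map such that ‖Q(v)‖ ≥ c‖v‖² for some c > 0 and all v. Then for every Schwartz function g on ℝ^d, the pullback g ∘ Q is a Schwartz function on ℝ^m, and the map g ↦ g∘Q is continuous from the Schwartz space 𝒮(ℝ^d) to 𝒮(ℝ^m). -/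
open SchwartzMap

/-! Each coordinate of `Q` is a polynomial, so `Q` has temperate growth, and the quadratic lower
bound `c‖v‖² ≤ ‖Q v‖` gives `‖v‖ ≤ C (1 + ‖Q v‖)`. These are exactly the two hypotheses under which
composition with `Q` is a continuous linear map between Schwartz spaces (`SchwartzMap.compCLM`). -/

theorem MvPolynomial.hasTemperateGrowth_eval {E R σ : Type*} [NormedAddCommGroup E]
    [NormedSpace ℝ E] [NormedCommRing R] [NormedAlgebra ℝ R] (P : MvPolynomial σ R)
    {x : σ → E → R} (hx : ∀ j, (x j).HasTemperateGrowth) :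
    (fun v => eval (fun j => x j v) P).HasTemperateGrowth := by
  induction P using MvPolynomial.induction_on with
  | C a => simpa only [eval_C] using Function.HasTemperateGrowth.const a
  | add p q hp hq => simpa only [eval_add] using hp.fun_add hq
  | mul_X p j hp => simpa only [eval_mul, eval_X] using hp.fun_mul (hx j)

theorem EuclideanSpace.hasTemperateGrowth_of_forall_coord {E ι : Type*} [NormedAddCommGroup E]
    [NormedSpace ℝ E] [Fintype ι] {f : E → EuclideanSpace ℝ ι}
    (hf : ∀ i, (fun x => f x i).HasTemperateGrowth) : f.HasTemperateGrowth := by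
  have hsum : f = fun x => ∑ i, f x i • EuclideanSpace.basisFun ι ℝ i := by
    funext x
    simpa using ((EuclideanSpace.basisFun ι ℝ).sum_repr (f x)).symm
  rw [hsum]
  exact .sum fun i _ => (hf i).fun_smul (.const _)

theorem norm_le_of_mul_norm_sq_le {E F : Type*} [SeminormedAddCommGroup E]
    [SeminormedAddCommGroup F] {Q : E → F} {c : ℝ} (hc : 0 < c)
    (hQ : ∀ v, c * ‖v‖ ^ 2 ≤ ‖Q v‖) (v : E) : ‖v‖ ≤ max 1 c⁻¹ * (1 + ‖Q v‖) := by
  have hsq : ‖v‖ ^ 2 ≤ c⁻¹ * ‖Q v‖ := by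
    rw [inv_mul_eq_div, le_div_iff₀' hc]
    exact hQ v
  have h1 : (1 : ℝ) ≤ max 1 c⁻¹ := le_max_left _ _
  have h2 : c⁻¹ ≤ max 1 c⁻¹ := le_max_right _ _
  nlinarith [sq_nonneg (‖v‖ - 1), norm_nonneg v, norm_nonneg (Q v)]

theorem stmt_14_general (d m : ℕ)
    (Q : EuclideanSpace ℝ (Fin m) → EuclideanSpace ℝ (Fin d))
    (hQpoly : ∀ i : Fin d, ∃ P : MvPolynomial (Fin m) ℝ,
      ∀ v : EuclideanSpace ℝ (Fin m), Q v i = MvPolynomial.eval (fun j => v j) P)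
    (c : ℝ) (hc : 0 < c)
    (hQgrow : ∀ v : EuclideanSpace ℝ (Fin m), c * ‖v‖ ^ 2 ≤ ‖Q v‖) :
    ∃ T : 𝓢(EuclideanSpace ℝ (Fin d), ℂ) →L[ℝ] 𝓢(EuclideanSpace ℝ (Fin m), ℂ),
      ∀ (g : 𝓢(EuclideanSpace ℝ (Fin d), ℂ)) (v : EuclideanSpace ℝ (Fin m)),
        T g v = g (Q v) := by
  have hQ : Q.HasTemperateGrowth := EuclideanSpace.hasTemperateGrowth_of_forall_coord fun i => by
    obtain ⟨P, hP⟩ := hQpoly i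
    rw [show (fun v => Q v i) = _ from funext hP]
    exact P.hasTemperateGrowth_eval fun j => (EuclideanSpace.proj j).hasTemperateGrowth
  have hQ_upper : ∃ (k : ℕ) (C : ℝ), ∀ v, ‖v‖ ≤ C * (1 + ‖Q v‖) ^ k :=
    ⟨1, max 1 c⁻¹, fun v => by simpa using norm_le_of_mul_norm_sq_le hc hQgrow v⟩
  exact ⟨compCLM ℝ hQ hQ_upper, fun g v => rfl⟩

/-- Pullback along a polynomial map Q with ‖Q(v)‖ ≥ c‖v‖² maps Schwartz functions
to Schwartz functions, continuously (stated in the presence of a smooth function f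
of temperate growth, as in the superbosonisation setting). -/
theorem stmt_14 (d m : ℕ) (f : EuclideanSpace ℝ (Fin d) → ℂ)
    (hf : Function.HasTemperateGrowth f)
    (Q : EuclideanSpace ℝ (Fin m) → EuclideanSpace ℝ (Fin d))
    (hQpoly : ∀ i : Fin d, ∃ P : MvPolynomial (Fin m) ℝ,
      ∀ v : EuclideanSpace ℝ (Fin m), Q v i = MvPolynomial.eval (fun j => v j) P)
    (c : ℝ) (hc : 0 < c)
    (hQgrow : ∀ v : EuclideanSpace ℝ (Fin m), c * ‖v‖ ^ 2 ≤ ‖Q v‖) :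
    ∃ T : 𝓢(EuclideanSpace ℝ (Fin d), ℂ) →L[ℝ] 𝓢(EuclideanSpace ℝ (Fin m), ℂ),
      ∀ (g : 𝓢(EuclideanSpace ℝ (Fin d), ℂ)) (v : EuclideanSpace ℝ (Fin m)),
        T g v = g (Q v) :=
  stmt_14_general d m Q hQpoly c hc hQgrow
end
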